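/- For every positive integer n and all real numbers α and β, the n×n Hankel determinant det(αβ·c_{i+j+1} + (α+β)·c_{i+j+2} + c_{i+j+3})_{i,j=0}^{n−1} equals (Σ_{j=0}^{n} (∏_{ℓ=2j+1}^{2n} T_ℓ)·g_{2j+1}(α)·g_{2j+1}(β)) · det(c_{i+j+1})_{i,j=0}^{n−1}. -/
import Mathlib


/-- `dyckGF T n k` is the weighted Dyck path generating function `c(n,k)`:
`c(0,k) = [k = 0]`, `c(n,k) = 0` for `k < 0`, and
`c(n,k) = c(n-1,k-1) + T_k c(n-1,k+1)` for `n ≥ 1`, `k ≥ 0`. -/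
def dyckGF (T : ℕ → ℝ) : ℕ → ℤ → ℝ
  | 0, k => if k = 0 then 1 else 0
  | n+1, k =>
      if k < 0 then 0
      else dyckGF T n (k-1) + T k.toNat * dyckGF T n (k+1)

/-- The polynomials `g_n(α)`: `g_0 = 1`, `g_1 = 1`,
`g_{2n}(α) = α g_{2n-1}(α) + T_{2n-2} g_{2n-2}(α)` and
`g_{2n+1}(α) = g_{2n}(α) + T_{2n-1} g_{2n-1}(α)` for `n ≥ 1`. -/
def gpoly (T : ℕ → ℝ) (α : ℝ) : ℕ → ℝ
  | 0 => 1
  | 1 => 1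
  | n+2 => (if (n+2) % 2 = 0 then α else 1) * gpoly T α (n+1) + T n * gpoly T α n

namespace HankelAux
open Finset Matrix

noncomputable def cN (T : ℕ → ℝ) (m k : ℕ) : ℝ := dyckGF T m k

noncomputable def w (T : ℕ → ℝ) (k : ℕ) : ℝ := ∏ ℓ ∈ Finset.range k, T ℓ

variable (T : ℕ → ℝ)

lemma dyck_neg (m : ℕ) (k : ℤ) (hk : k < 0) : dyckGF T m k = 0 := by
  cases m with
  | zero => simp [dyckGF]; omega
  | succ m => simp [dyckGF, hk]

lemma cN_zero (k : ℕ) : cN T 0 k = if k = 0 then 1 else 0 := by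
  simp [cN, dyckGF]

lemma cN_succ (m k : ℕ) : cN T (m+1) (k+1) = cN T m k + T (k+1) * cN T m (k+2) := by
  simp only [cN, dyckGF]
  rw [if_neg (by push_cast; omega)]
  have h1 : ((k+1:ℕ):ℤ) - 1 = ((k:ℕ):ℤ) := by push_cast; ring
  have h2 : ((k+1:ℕ):ℤ) + 1 = ((k+2:ℕ):ℤ) := by push_cast; ring
  have h3 : ((k+1:ℕ):ℤ).toNat = k+1 := by omega
  rw [h1, h2, h3]

lemma cN_succ_zero (m : ℕ) : cN T (m+1) 0 = T 0 * cN T m 1 := by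
  simp only [cN, dyckGF]
  rw [if_neg (by norm_num)]
  rw [show ((0:ℕ):ℤ) - 1 = (-1 : ℤ) by norm_num, dyck_neg T m _ (by norm_num)]
  norm_num

lemma cN_gt : ∀ m k : ℕ, m < k → cN T m k = 0 := by
  intro m
  induction m with
  | zero => intro k hk; rw [cN_zero, if_neg]; omega
  | succ m ih =>
      intro k hk
      obtain ⟨k', rfl⟩ : ∃ k', k = k' + 1 := ⟨k - 1, by omega⟩
      rw [cN_succ, ih k' (by omega), ih (k'+2) (by omega)]
      ring

lemma cN_parity : ∀ m k : ℕ, (m + k) % 2 = 1 → cN T m k = 0 := by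
  intro m
  induction m with
  | zero => intro k hk; rw [cN_zero, if_neg]; omega
  | succ m ih =>
      intro k hk
      cases k with
      | zero =>
          rw [cN_succ_zero, ih 1 (by omega)]; ring
      | succ k' =>
          rw [cN_succ, ih k' (by omega), ih (k'+2) (by omega)]; ring

lemma cN_self : ∀ m : ℕ, cN T m m = 1 := by
  intro m
  induction m with
  | zero => simp [cN_zero]
  | succ m ih => rw [cN_succ, ih, cN_gt T m (m+2) (by omega)]; ring

lemma cN_two (m k : ℕ) :
    cN T (m+2) (k+2) = cN T m k + (T (k+1) + T (k+2)) * cN T m (k+2)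
      + T (k+2) * T (k+3) * cN T m (k+4) := by
  rw [show m + 2 = (m+1)+1 by ring, cN_succ, cN_succ, cN_succ]
  ring

lemma cN_two_one (m : ℕ) :
    cN T (m+2) 1 = (T 0 + T 1) * cN T m 1 + T 1 * T 2 * cN T m 3 := by
  rw [show m + 2 = (m+1)+1 by ring, show (1:ℕ) = 0 + 1 by ring, cN_succ, cN_succ_zero,
    cN_succ]
  ring

lemma w_succ (k : ℕ) : w T (k+1) = w T k * T k := Finset.prod_range_succ T k

lemma w_zero : w T 0 = 1 := rfl

lemma decomp (N m j : ℕ) (h : m + 2 ≤ N) :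
    ∑ k ∈ range N, cN T (m+1) k * w T k * cN T j k
      = (∑ k ∈ range N, cN T m k * (w T k * T k) * cN T j (k+1))
        + ∑ k ∈ range N, cN T m (k+1) * (w T k * T k) * cN T j k := by
  obtain ⟨N', rfl⟩ : ∃ N', N = N' + 1 := ⟨N - 1, by omega⟩
  rw [Finset.sum_range_succ'
    (fun k => cN T (m+1) k * w T k * cN T j k) N']
  rw [Finset.sum_range_succ (fun k => cN T m k * (w T k * T k) * cN T j (k+1)) N']
  rw [Finset.sum_range_succ'
    (fun k => cN T m (k+1) * (w T k * T k) * cN T j k) N']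
  rw [cN_gt T m N' (by omega)]
  rw [cN_succ_zero]
  have key : ∀ k, cN T (m+1) (k+1) * w T (k+1) * cN T j (k+1)
      = cN T m k * (w T k * T k) * cN T j (k+1)
        + cN T m (k+1+1) * (w T (k+1) * T (k+1)) * cN T j (k+1) := by
    intro k
    rw [cN_succ, w_succ]
    ring
  rw [Finset.sum_congr rfl (fun k _ => key k), Finset.sum_add_distrib]
  simp [w_zero, w_succ]
  ring

lemma swap (N m j : ℕ) (hm : m + 2 ≤ N) (hj : j + 2 ≤ N) :
    ∑ k ∈ range N, cN T (m+1) k * w T k * cN T j k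
      = ∑ k ∈ range N, cN T m k * w T k * cN T (j+1) k := by
  rw [decomp T N m j hm]
  have h2 : ∑ k ∈ range N, cN T m k * w T k * cN T (j+1) k
      = ∑ k ∈ range N, cN T (j+1) k * w T k * cN T m k :=
    Finset.sum_congr rfl (fun k _ => by ring)
  rw [h2, decomp T N j m hj]
  have h3 : ∑ k ∈ range N, cN T j k * (w T k * T k) * cN T m (k+1)
      = ∑ k ∈ range N, cN T m (k+1) * (w T k * T k) * cN T j k :=
    Finset.sum_congr rfl (fun k _ => by ring)
  have h4 : ∑ k ∈ range N, cN T j (k+1) * (w T k * T k) * cN T m k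
      = ∑ k ∈ range N, cN T m k * (w T k * T k) * cN T j (k+1) :=
    Finset.sum_congr rfl (fun k _ => by ring)
  rw [h3, h4]
  ring

lemma split : ∀ m j : ℕ, (∑ k ∈ range (m+j+2), cN T m k * w T k * cN T j k) = cN T (m+j) 0 := by
  intro m
  induction m with
  | zero =>
      intro j
      rw [Finset.sum_eq_single_of_mem 0 (Finset.mem_range.mpr (by omega))]
      · simp [cN_zero, w_zero]
      · intro b _ hb
        rw [cN_zero, if_neg hb]
        ring
  | succ m ih =>
      intro j
      have h1 : m + 1 + j + 2 = m + (j+1) + 2 := by ring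
      rw [swap T (m+1+j+2) m j (by omega) (by omega), h1, ih (j+1),
        show m + (j+1) = m + 1 + j by ring]

lemma split' (m j N : ℕ) (h : m + 1 ≤ N) :
    (∑ k ∈ range N, cN T m k * w T k * cN T j k) = cN T (m+j) 0 := by
  have trunc : ∀ M : ℕ, m + 1 ≤ M →
      (∑ k ∈ range M, cN T m k * w T k * cN T j k)
        = ∑ k ∈ range (m+1), cN T m k * w T k * cN T j k := by
    intro M hM
    rw [← Finset.sum_subset (Finset.range_subset_range.mpr hM)]
    intro x _ hx
    rw [cN_gt T m x (by simp at hx ⊢; omega)]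
    ring
  rw [trunc N h, ← trunc (m+j+2) (by omega), split T m j]

lemma sum_range_two_mul (f : ℕ → ℝ) :
    ∀ M : ℕ, ∑ k ∈ range (2*M), f k
      = (∑ t ∈ range M, f (2*t)) + ∑ t ∈ range M, f (2*t+1) := by
  intro M
  induction M with
  | zero => simp
  | succ M ih =>
      rw [show 2*(M+1) = (2*M+1)+1 by ring, Finset.sum_range_succ, Finset.sum_range_succ,
        ih, Finset.sum_range_succ (fun t => f (2*t)) M,
        Finset.sum_range_succ (fun t => f (2*t+1)) M]
      ring

lemma splitOdd (i j N : ℕ) (h : i + 1 ≤ N) :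
    ∑ t ∈ range N, cN T (2*i+1) (2*t+1) * w T (2*t+1) * cN T (2*j+1) (2*t+1)
      = cN T (2*(i+j+1)) 0 := by
  have trunc : ∀ M : ℕ, i + 1 ≤ M →
      (∑ t ∈ range M, cN T (2*i+1) (2*t+1) * w T (2*t+1) * cN T (2*j+1) (2*t+1))
        = ∑ t ∈ range (i+1), cN T (2*i+1) (2*t+1) * w T (2*t+1) * cN T (2*j+1) (2*t+1) := by
    intro M hM
    rw [← Finset.sum_subset (Finset.range_subset_range.mpr hM)]
    intro x _ hx
    rw [cN_gt T (2*i+1) (2*x+1) (by simp at hx ⊢; omega)]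
    ring
  rw [trunc N h]
  have full := split' T (2*i+1) (2*j+1) (2*(i+1)) (by omega)
  rw [sum_range_two_mul (fun k => cN T (2*i+1) k * w T k * cN T (2*j+1) k) (i+1)] at full
  have even0 : (∑ t ∈ range (i+1), cN T (2*i+1) (2*t) * w T (2*t) * cN T (2*j+1) (2*t)) = 0 := by
    apply Finset.sum_eq_zero
    intro t _
    rw [cN_parity T (2*i+1) (2*t) (by omega)]
    ring
  rw [even0, zero_add] at full
  rw [full, show 2*i+1+(2*j+1) = 2*(i+j+1) by ring]

noncomputable def Tri (T : ℕ → ℝ) (γ : ℝ) (m : ℕ) : Matrix (Fin m) (Fin m) ℝ :=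
  Matrix.of fun k' k =>
    if (k' : ℕ) = (k : ℕ) then γ + T (2*(k:ℕ)) + T (2*(k:ℕ)+1)
    else if (k' : ℕ) + 1 = (k : ℕ) then 1
    else if (k' : ℕ) = (k : ℕ) + 1 then T (2*(k:ℕ)+1) * T (2*(k:ℕ)+2)
    else 0

lemma succAbove_val {m : ℕ} (p : Fin (m+1)) (i : Fin m) :
    ((p.succAbove i) : ℕ) = if (i:ℕ) < (p:ℕ) then (i:ℕ) else (i:ℕ)+1 := by
  have hiff : (Fin.castSucc i < p) ↔ ((i:ℕ) < (p:ℕ)) := by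
    rw [Fin.lt_def, Fin.coe_castSucc]
  rw [Fin.succAbove]
  split_ifs with h1 h2 h2
  · simp
  · exact absurd (hiff.mp h1) h2
  · exact absurd (hiff.mpr h2) h1
  · simp

lemma tri_sum (m k : ℕ) (hk : k < m) (g : ℕ → ℝ) (d s : ℝ) :
    (∑ k' ∈ range m, g k' *
        (if k' = k then d else if k' + 1 = k then 1 else if k' = k + 1 then s else 0))
      = g k * d + (if k = 0 then 0 else g (k-1)) + (if k + 1 < m then g (k+1) * s else 0) := by
  have point : ∀ k' : ℕ, g k' *
        (if k' = k then d else if k' + 1 = k then 1 else if k' = k + 1 then s else 0)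
      = (if k' = k then g k' * d else 0) + (if k' + 1 = k then g k' else 0)
        + (if k' = k + 1 then g k' * s else 0) := by
    intro k'
    split_ifs with h1 h2 h3 h2 h3 h3 <;> first | (exfalso; omega) | ring
  rw [Finset.sum_congr rfl (fun k' _ => point k'), Finset.sum_add_distrib,
    Finset.sum_add_distrib]
  congr 1
  · congr 1
    · rw [Finset.sum_ite_eq' (range m) k (fun k' => g k' * d), if_pos (Finset.mem_range.mpr hk)]
    · cases k with
      | zero =>
          rw [Finset.sum_eq_zero] <;> simp
      | succ t =>
          have conv1 : ∀ k' : ℕ,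
              (if k' + 1 = t + 1 then g k' else 0) = (if k' = t then g k' else 0) := by
            intro k'
            by_cases h : k' = t
            · rw [if_pos (by omega), if_pos h]
            · rw [if_neg (by omega), if_neg h]
          rw [Finset.sum_congr rfl (fun k' _ => conv1 k'),
            Finset.sum_ite_eq' (range m) t (fun k' => g k'),
            if_pos (Finset.mem_range.mpr (by omega))]
          simp
  · rw [Finset.sum_ite_eq' (range m) (k+1) (fun k' => g k' * s)]
    simp [Finset.mem_range]

lemma Tri_submatrix {m M : ℕ} (γ : ℝ) (f g : Fin m → Fin M)
    (hf : ∀ t, (f t : ℕ) = (t : ℕ)) (hg : ∀ t, (g t : ℕ) = (t : ℕ)) :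
    (Tri T γ M).submatrix f g = Tri T γ m := by
  ext i j
  simp only [Tri, Matrix.submatrix_apply, Matrix.of_apply, hf, hg]

lemma gpoly_zero (γ : ℝ) : gpoly T γ 0 = 1 := rfl

lemma gpoly_one (γ : ℝ) : gpoly T γ 1 = 1 := rfl

lemma gpoly_step (γ : ℝ) (n : ℕ) : gpoly T γ (n+2)
    = (if (n+2) % 2 = 0 then γ else 1) * gpoly T γ (n+1) + T n * gpoly T γ n := by
  rw [gpoly]

lemma gpoly_three (γ : ℝ) : gpoly T γ 3 = γ + T 0 + T 1 := by
  have h2 := gpoly_step T γ 0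
  have h3 := gpoly_step T γ 1
  norm_num at h2 h3
  rw [h3, h2, gpoly_one, gpoly_zero]
  ring

lemma gpoly_odd_rec (γ : ℝ) (m : ℕ) :
    gpoly T γ (2*m+5)
      = (γ + T (2*m+2) + T (2*m+3)) * gpoly T γ (2*m+3)
        - T (2*m+1) * T (2*m+2) * gpoly T γ (2*m+1) := by
  have h5 := gpoly_step T γ (2*m+3)
  have h4 := gpoly_step T γ (2*m+2)
  have h3 := gpoly_step T γ (2*m+1)
  rw [if_neg (by omega)] at h5
  rw [if_pos (by omega)] at h4
  rw [if_neg (by omega)] at h3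
  rw [show 2*m+3+2 = 2*m+5 by ring, show 2*m+3+1 = 2*m+4 by ring] at h5
  rw [show 2*m+2+2 = 2*m+4 by ring, show 2*m+2+1 = 2*m+3 by ring] at h4
  rw [show 2*m+1+2 = 2*m+3 by ring, show 2*m+1+1 = 2*m+2 by ring] at h3
  have e2 : gpoly T γ (2*m+2) = gpoly T γ (2*m+3) - T (2*m+1) * gpoly T γ (2*m+1) := by
    rw [h3]; ring
  rw [h5, h4, e2]
  ring

lemma det_Tri (γ : ℝ) : ∀ m : ℕ, (Tri T γ m).det = gpoly T γ (2*m+1) := by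
  intro m
  induction m using Nat.strong_induction_on with
  | _ m ih =>
    match m with
    | 0 => simp [Matrix.det_fin_zero, gpoly_one]
    | 1 =>
        rw [Matrix.det_fin_one]
        show Tri T γ 1 0 0 = gpoly T γ 3
        rw [gpoly_three]
        simp [Tri]
    | (m+2) =>
      rw [Matrix.det_succ_row (Tri T γ (m+2)) (Fin.last (m+1))]
      have hlast : ((Fin.last (m+1) : Fin (m+2)) : ℕ) = m + 1 := rfl
      set jm : Fin (m+2) := ⟨m, by omega⟩ with hjm
      have hjv : (jm : ℕ) = m := rfl
      rw [Finset.sum_eq_add_of_mem jm (Fin.last (m+1)) (Finset.mem_univ _) (Finset.mem_univ _)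
        (by intro h; apply_fun (Fin.val) at h; rw [hjv, hlast] at h; omega)]
      · -- main computation
        have entry_diag : Tri T γ (m+2) (Fin.last (m+1)) (Fin.last (m+1))
            = γ + T (2*m+2) + T (2*m+3) := by
          simp only [Tri, Matrix.of_apply, hlast]
          norm_num
          rw [show 2*(m+1) = 2*m+2 by ring, show 2*m+2+1 = 2*m+3 by ring]
        have entry_sub : Tri T γ (m+2) (Fin.last (m+1)) jm
            = T (2*m+1) * T (2*m+2) := by
          simp only [Tri, Matrix.of_apply, hlast, hjv]
          norm_num
          intro h
          exact absurd h (by omega)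
        have minor_diag : ((Tri T γ (m+2)).submatrix (Fin.last (m+1)).succAbove
              (Fin.last (m+1)).succAbove).det = gpoly T γ (2*m+3) := by
          rw [Fin.succAbove_last, Tri_submatrix T γ Fin.castSucc Fin.castSucc
            (fun t => rfl) (fun t => rfl), ih (m+1) (by omega),
            show 2*(m+1)+1 = 2*m+3 by ring]
        have hcol : ((jm.succAbove (Fin.last m)) : ℕ) = m + 1 := by
          rw [succAbove_val, if_neg (by rw [hjv, Fin.val_last]; omega), Fin.val_last]
        have minor_sub : ((Tri T γ (m+2)).submatrix (Fin.last (m+1)).succAbove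
              jm.succAbove).det = gpoly T γ (2*m+1) := by
          set B := (Tri T γ (m+2)).submatrix (Fin.last (m+1)).succAbove jm.succAbove with hB
          rw [Matrix.det_succ_column B (Fin.last m)]
          rw [Finset.sum_eq_single_of_mem (Fin.last m) (Finset.mem_univ _)]
          · have col_entry : B (Fin.last m) (Fin.last m) = 1 := by
              rw [hB]
              simp only [Matrix.submatrix_apply, Fin.succAbove_last, Tri, Matrix.of_apply,
                hcol, Fin.coe_castSucc, Fin.val_last]
              norm_num
            have minor2 : (B.submatrix (Fin.last m).succAbove (Fin.last m).succAbove).det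
                = gpoly T γ (2*m+1) := by
              rw [hB, Matrix.submatrix_submatrix]
              rw [Tri_submatrix T γ _ _
                (fun t => by
                  simp only [Function.comp_apply]
                  rw [Fin.succAbove_last_apply, Fin.succAbove_last_apply]
                  simp)
                (fun t => by
                  simp only [Function.comp_apply]
                  rw [Fin.succAbove_last_apply, succAbove_val,
                    if_pos (by rw [hjv, Fin.coe_castSucc]; exact t.isLt), Fin.coe_castSucc])]
              exact ih m (by omega)
            rw [col_entry, minor2, Fin.val_last,
              show (-1:ℝ)^(m+m) = 1 from Even.neg_one_pow ⟨m, rfl⟩]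
            ring
          · intro b _ hb
            have hbv : (b : ℕ) < m := by
              have := b.isLt
              rcases Nat.lt_or_ge (b : ℕ) m with h | h
              · exact h
              · exfalso; exact hb (Fin.ext (by rw [Fin.val_last]; omega))
            have : B b (Fin.last m) = 0 := by
              rw [hB]
              simp only [Matrix.submatrix_apply, Fin.succAbove_last, Tri, Matrix.of_apply,
                hcol, Fin.coe_castSucc]
              rw [if_neg (by omega), if_neg (by omega), if_neg (by omega)]
            rw [this]
            ring
        rw [entry_diag, entry_sub, minor_diag, minor_sub, hlast, hjv]
        rw [show 2*(m+2)+1 = 2*m+5 by ring, gpoly_odd_rec T γ m]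
        rw [show (-1:ℝ)^(m+1+(m+1)) = 1 from Even.neg_one_pow ⟨m+1, by ring⟩,
          show (-1:ℝ)^(m+1+m) = -1 by
            rw [show m+1+m = 2*m+1 by ring]; exact Odd.neg_one_pow ⟨m, by ring⟩]
        ring
      · intro c _ hc
        obtain ⟨hc1, hc2⟩ := hc
        have hcv : (c : ℕ) ≠ m ∧ (c : ℕ) ≠ m + 1 := by
          constructor
          · intro h; exact hc1 (Fin.ext (by rw [hjv, h]))
          · intro h; exact hc2 (Fin.ext (by rw [hlast, h]))
        have : Tri T γ (m+2) (Fin.last (m+1)) c = 0 := by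
          simp only [Tri, Matrix.of_apply, hlast]
          rw [if_neg (by omega), if_neg (by omega), if_neg (by omega)]
        rw [this]
        ring

lemma det_Tri_minor (γ : ℝ) : ∀ (n : ℕ) (a : Fin (n+1)),
    ((Tri T γ (n+1)).submatrix Fin.castSucc a.succAbove).det = gpoly T γ (2*(a:ℕ)+1) := by
  intro n
  induction n with
  | zero =>
      intro a
      have : (a : ℕ) = 0 := by omega
      rw [Matrix.det_fin_zero, this, gpoly_one]
  | succ n ih =>
      intro a
      induction a using Fin.lastCases with
      | last =>
        rw [Fin.succAbove_last, Tri_submatrix T γ Fin.castSucc Fin.castSucc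
          (fun t => rfl) (fun t => rfl), det_Tri T γ (n+1)]
        simp
      | cast a' =>
        set A := (Tri T γ (n+2)).submatrix Fin.castSucc (Fin.castSucc a').succAbove with hA
        rw [Matrix.det_succ_column A (Fin.last n)]
        have hcol : (((Fin.castSucc a').succAbove (Fin.last n)) : ℕ) = n + 1 := by
          rw [succAbove_val, if_neg (by rw [Fin.coe_castSucc, Fin.val_last]; omega), Fin.val_last]
        rw [Finset.sum_eq_single_of_mem (Fin.last n) (Finset.mem_univ _)]
        · have centry : A (Fin.last n) (Fin.last n) = 1 := by
            rw [hA]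
            simp only [Matrix.submatrix_apply, Tri, Matrix.of_apply, hcol,
              Fin.coe_castSucc, Fin.val_last]
            norm_num
          have minor2 : (A.submatrix (Fin.last n).succAbove (Fin.last n).succAbove).det
              = gpoly T γ (2*(a':ℕ)+1) := by
            rw [hA, Matrix.submatrix_submatrix]
            have hfun : ((Fin.castSucc a').succAbove ∘ (Fin.last n).succAbove)
                = Fin.castSucc ∘ a'.succAbove := by
              funext t
              simp only [Function.comp_apply]
              rw [Fin.succAbove_last_apply]
              exact Fin.castSucc_succAbove_castSucc
            rw [hfun]
            have step : (Tri T γ (n+2)).submatrix (Fin.castSucc ∘ (Fin.last n).succAbove)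
                  (Fin.castSucc ∘ a'.succAbove)
                = ((Tri T γ (n+2)).submatrix Fin.castSucc Fin.castSucc).submatrix
                    (Fin.last n).succAbove a'.succAbove := by
              rw [Matrix.submatrix_submatrix]
            rw [step, Tri_submatrix T γ Fin.castSucc Fin.castSucc (fun t => rfl) (fun t => rfl)]
            have hrow : ((Fin.last n).succAbove : Fin n → Fin (n+1)) = Fin.castSucc := by
              funext t; exact Fin.succAbove_last_apply t
            rw [hrow]
            exact ih a'
          rw [centry, minor2, Fin.val_last,
            show (-1:ℝ)^(n+n) = 1 from Even.neg_one_pow ⟨n, rfl⟩]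
          rw [show ((Fin.castSucc a' : Fin (n+2)) : ℕ) = (a' : ℕ) from Fin.coe_castSucc a']
          ring
        · intro b _ hb
          have hbv : (b : ℕ) < n := by
            have := b.isLt
            rcases Nat.lt_or_ge (b : ℕ) n with h | h
            · exact h
            · exfalso; exact hb (Fin.ext (by rw [Fin.val_last]; omega))
          have : A b (Fin.last n) = 0 := by
            rw [hA]
            simp only [Matrix.submatrix_apply, Tri, Matrix.of_apply, hcol, Fin.coe_castSucc]
            rw [if_neg (by omega), if_neg (by omega), if_neg (by omega)]
          rw [this]
          ring

lemma updateRow_submatrix_castSucc {q : ℕ} (A : Matrix (Fin (q+1)) (Fin (q+1)) ℝ)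
    (v : Fin (q+1) → ℝ) (f : Fin q → Fin (q+1)) :
    ((A.updateRow (Fin.last q) v).submatrix Fin.castSucc f) = A.submatrix Fin.castSucc f := by
  ext i j
  simp only [Matrix.submatrix_apply]
  rw [Matrix.updateRow_ne]
  exact Fin.ne_of_lt (Fin.castSucc_lt_last i)

lemma adj_expand {q : ℕ} (A : Matrix (Fin (q+1)) (Fin (q+1)) ℝ) (a : Fin (q+1)) :
    A.adjugate a (Fin.last q)
      = (-1:ℝ)^((q:ℕ) + (a:ℕ)) * (A.submatrix Fin.castSucc a.succAbove).det := by
  rw [Matrix.adjugate_apply, Matrix.det_succ_row _ (Fin.last q)]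
  rw [Finset.sum_eq_single_of_mem a (Finset.mem_univ _)]
  · have hdiag : (A.updateRow (Fin.last q) (Pi.single a 1)) (Fin.last q) a = 1 := by
      rw [Matrix.updateRow_self]
      exact Pi.single_eq_same a 1
    rw [hdiag, Fin.succAbove_last, updateRow_submatrix_castSucc, Fin.val_last]
    ring
  · intro b _ hb
    have hz : (A.updateRow (Fin.last q) (Pi.single a 1)) (Fin.last q) b = 0 := by
      rw [Matrix.updateRow_self]
      exact Pi.single_eq_of_ne hb 1
    rw [hz]
    ring

lemma adj_Tri_last (γ : ℝ) (n : ℕ) (a : Fin (n+1)) :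
    (Tri T γ (n+1)).adjugate a (Fin.last n)
      = (-1:ℝ)^((n:ℕ) + (a:ℕ)) * gpoly T γ (2*(a:ℕ)+1) := by
  rw [adj_expand, det_Tri_minor]

lemma det_corner {q : ℕ} (A : Matrix (Fin (q+1)) (Fin (q+1)) ℝ) :
    (A.submatrix Fin.castSucc Fin.castSucc).det = A.adjugate (Fin.last q) (Fin.last q) := by
  rw [adj_expand A (Fin.last q), Fin.succAbove_last, Fin.val_last,
    show (-1:ℝ)^(q+q) = 1 from Even.neg_one_pow ⟨q, rfl⟩]
  ring

noncomputable def Csq (T : ℕ → ℝ) (n : ℕ) : Matrix (Fin n) (Fin n) ℝ :=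
  Matrix.of fun i k => cN T (2*(i:ℕ)+1) (2*(k:ℕ)+1)

noncomputable def Chat (T : ℕ → ℝ) (n : ℕ) : Matrix (Fin n) (Fin (n+1)) ℝ :=
  Matrix.of fun i k => cN T (2*(i:ℕ)+1) (2*(k:ℕ)+1)

noncomputable def Bm (T : ℕ → ℝ) (γ : ℝ) (n : ℕ) : Matrix (Fin n) (Fin (n+1)) ℝ :=
  Matrix.of fun i k => γ * cN T (2*(i:ℕ)+1) (2*(k:ℕ)+1) + cN T (2*(i:ℕ)+3) (2*(k:ℕ)+1)

lemma det_Csq (n : ℕ) : (Csq T n).det = 1 := by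
  have h : (Csq T n).BlockTriangular OrderDual.toDual := by
    intro i j hij
    have : (i : ℕ) < (j : ℕ) := hij
    simp only [Csq, Matrix.of_apply]
    exact cN_gt T _ _ (by omega)
  rw [Matrix.det_of_lowerTriangular (Csq T n) h]
  have : ∀ i : Fin n, Csq T n i i = 1 := fun i => cN_self T (2*(i:ℕ)+1)
  rw [Finset.prod_congr rfl (fun i _ => this i)]
  simp

lemma Bm_eq (γ : ℝ) (n : ℕ) (hn : 0 < n) : Bm T γ n = Chat T n * Tri T γ (n+1) := by
  ext i k
  rw [Matrix.mul_apply]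
  have conv1 : ∀ k' : Fin (n+1), Chat T n i k' * Tri T γ (n+1) k' k
      = cN T (2*(i:ℕ)+1) (2*(k':ℕ)+1) *
          (if (k':ℕ) = (k:ℕ) then γ + T (2*(k:ℕ)) + T (2*(k:ℕ)+1)
           else if (k':ℕ) + 1 = (k:ℕ) then 1
           else if (k':ℕ) = (k:ℕ) + 1 then T (2*(k:ℕ)+1) * T (2*(k:ℕ)+2) else 0) := by
    intro k'; rfl
  rw [Finset.sum_congr rfl (fun k' _ => conv1 k')]
  rw [Fin.sum_univ_eq_sum_range (fun k' => cN T (2*(i:ℕ)+1) (2*k'+1) *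
          (if k' = (k:ℕ) then γ + T (2*(k:ℕ)) + T (2*(k:ℕ)+1)
           else if k' + 1 = (k:ℕ) then 1
           else if k' = (k:ℕ) + 1 then T (2*(k:ℕ)+1) * T (2*(k:ℕ)+2) else 0)) (n+1)]
  rw [tri_sum (n+1) (k:ℕ) k.isLt (fun k' => cN T (2*(i:ℕ)+1) (2*k'+1))]
  show Bm T γ n i k = _
  simp only [Bm, Matrix.of_apply]
  rcases Nat.eq_zero_or_pos (k:ℕ) with hk0 | hkpos
  · rw [hk0]
    rw [if_pos rfl, if_pos (by omega)]
    rw [show (2*(i:ℕ)+3) = (2*(i:ℕ)+1)+2 by ring, cN_two_one]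
    norm_num
    ring
  · obtain ⟨t, ht⟩ : ∃ t, (k:ℕ) = t + 1 := ⟨(k:ℕ) - 1, by omega⟩
    rw [ht]
    rw [if_neg (by omega)]
    have expand : cN T (2*(i:ℕ)+3) (2*(t+1)+1)
        = cN T (2*(i:ℕ)+1) (2*t+1) + (T (2*t+2) + T (2*t+3)) * cN T (2*(i:ℕ)+1) (2*t+3)
          + T (2*t+3) * T (2*t+4) * cN T (2*(i:ℕ)+1) (2*t+5) := by
      rw [show 2*(t+1)+1 = (2*t+1)+2 by ring, show (2*(i:ℕ)+3) = (2*(i:ℕ)+1)+2 by ring,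
        cN_two]
    rw [expand]
    rcases Nat.lt_or_ge (t+1+1) (n+1) with hlt | hge
    · rw [if_pos hlt]
      rw [show 2*(t+1) = 2*t+2 by ring, show 2*t+2+1 = 2*t+3 by ring,
        show 2*t+2+2 = 2*t+4 by ring, show t+1-1 = t by omega,
        show 2*(t+1+1)+1 = 2*t+5 by ring]
      ring
    · rw [if_neg (by omega)]
      have hz : cN T (2*(i:ℕ)+1) (2*t+5) = 0 := by
        apply cN_gt
        have : (i:ℕ) < n := i.isLt
        omega
      rw [hz, show t+1-1 = t by omega]
      ring

lemma Hankel_RHS_eq (n : ℕ) :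
    (Matrix.of fun i j : Fin n => cN T (2*((i:ℕ)+(j:ℕ)+1)) 0)
      = Csq T n * Matrix.diagonal (fun k : Fin n => w T (2*(k:ℕ)+1)) * (Csq T n)ᵀ := by
  ext i j
  rw [Matrix.mul_apply]
  have conv1 : ∀ k : Fin n,
      (Csq T n * Matrix.diagonal (fun k : Fin n => w T (2*(k:ℕ)+1))) i k * (Csq T n)ᵀ k j
      = cN T (2*(i:ℕ)+1) (2*(k:ℕ)+1) * w T (2*(k:ℕ)+1) * cN T (2*(j:ℕ)+1) (2*(k:ℕ)+1) := by
    intro k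
    rw [Matrix.mul_diagonal, Matrix.transpose_apply]
    rfl
  rw [Finset.sum_congr rfl (fun k _ => conv1 k)]
  rw [Fin.sum_univ_eq_sum_range (fun k => cN T (2*(i:ℕ)+1) (2*k+1) * w T (2*k+1)
    * cN T (2*(j:ℕ)+1) (2*k+1)) n]
  rw [splitOdd T (i:ℕ) (j:ℕ) n (by omega)]
  rfl

lemma Hankel_LHS_eq (n : ℕ) (α β : ℝ) :
    (Matrix.of fun i j : Fin n =>
        α * β * cN T (2*((i:ℕ)+(j:ℕ)+1)) 0 + (α + β) * cN T (2*((i:ℕ)+(j:ℕ)+2)) 0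
          + cN T (2*((i:ℕ)+(j:ℕ)+3)) 0)
      = Bm T α n * Matrix.diagonal (fun k : Fin (n+1) => w T (2*(k:ℕ)+1)) * (Bm T β n)ᵀ := by
  ext i j
  rw [Matrix.mul_apply]
  have conv1 : ∀ k : Fin (n+1),
      (Bm T α n * Matrix.diagonal (fun k : Fin (n+1) => w T (2*(k:ℕ)+1))) i k * (Bm T β n)ᵀ k j
      = (α * cN T (2*(i:ℕ)+1) (2*(k:ℕ)+1) + cN T (2*(i:ℕ)+3) (2*(k:ℕ)+1))
          * w T (2*(k:ℕ)+1)
          * (β * cN T (2*(j:ℕ)+1) (2*(k:ℕ)+1) + cN T (2*(j:ℕ)+3) (2*(k:ℕ)+1)) := by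
    intro k
    rw [Matrix.mul_diagonal, Matrix.transpose_apply]
    rfl
  rw [Finset.sum_congr rfl (fun k _ => conv1 k)]
  have conv2 : ∀ k : ℕ,
      (α * cN T (2*(i:ℕ)+1) (2*k+1) + cN T (2*(i:ℕ)+3) (2*k+1)) * w T (2*k+1)
          * (β * cN T (2*(j:ℕ)+1) (2*k+1) + cN T (2*(j:ℕ)+3) (2*k+1))
      = α * β * (cN T (2*(i:ℕ)+1) (2*k+1) * w T (2*k+1) * cN T (2*(j:ℕ)+1) (2*k+1))
        + (α * (cN T (2*(i:ℕ)+1) (2*k+1) * w T (2*k+1) * cN T (2*((j:ℕ)+1)+1) (2*k+1))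
        + (β * (cN T (2*((i:ℕ)+1)+1) (2*k+1) * w T (2*k+1) * cN T (2*(j:ℕ)+1) (2*k+1))
        + cN T (2*((i:ℕ)+1)+1) (2*k+1) * w T (2*k+1) * cN T (2*((j:ℕ)+1)+1) (2*k+1))) := by
    intro k
    rw [show 2*((j:ℕ)+1)+1 = 2*(j:ℕ)+3 by ring, show 2*((i:ℕ)+1)+1 = 2*(i:ℕ)+3 by ring]
    ring
  rw [Fin.sum_univ_eq_sum_range (fun k =>
      (α * cN T (2*(i:ℕ)+1) (2*k+1) + cN T (2*(i:ℕ)+3) (2*k+1)) * w T (2*k+1)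
          * (β * cN T (2*(j:ℕ)+1) (2*k+1) + cN T (2*(j:ℕ)+3) (2*k+1))) (n+1)]
  rw [Finset.sum_congr rfl (fun k _ => conv2 k)]
  rw [Finset.sum_add_distrib, Finset.sum_add_distrib, Finset.sum_add_distrib,
    ← Finset.mul_sum, ← Finset.mul_sum, ← Finset.mul_sum]
  rw [splitOdd T (i:ℕ) (j:ℕ) (n+1) (by omega),
    splitOdd T (i:ℕ) ((j:ℕ)+1) (n+1) (by omega),
    splitOdd T ((i:ℕ)+1) (j:ℕ) (n+1) (by omega),
    splitOdd T ((i:ℕ)+1) ((j:ℕ)+1) (n+1) (by omega)]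
  rw [show (i:ℕ)+((j:ℕ)+1)+1 = (i:ℕ)+(j:ℕ)+2 by ring,
    show (i:ℕ)+1+(j:ℕ)+1 = (i:ℕ)+(j:ℕ)+2 by ring,
    show (i:ℕ)+1+((j:ℕ)+1)+1 = (i:ℕ)+(j:ℕ)+3 by ring]
  show α * β * cN T (2*((i:ℕ)+(j:ℕ)+1)) 0 + (α + β) * cN T (2*((i:ℕ)+(j:ℕ)+2)) 0
          + cN T (2*((i:ℕ)+(j:ℕ)+3)) 0 = _
  ring

lemma Chat_mul {q : ℕ} (n : ℕ) (X : Matrix (Fin (n+1)) (Fin q) ℝ) :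
    Chat T n * X = Csq T n * (X.submatrix Fin.castSucc id) := by
  ext i k
  rw [Matrix.mul_apply, Matrix.mul_apply]
  rw [Fin.sum_univ_castSucc (fun a => Chat T n i a * X a k)]
  have hz : Chat T n i (Fin.last n) = 0 := by
    simp only [Chat, Matrix.of_apply, Fin.val_last]
    exact cN_gt T _ _ (by have := i.isLt; omega)
  rw [hz, zero_mul, add_zero]
  apply Finset.sum_congr rfl
  intro b _
  rfl

lemma mul_ChatT {q : ℕ} (n : ℕ) (X : Matrix (Fin q) (Fin (n+1)) ℝ) :
    X * (Chat T n)ᵀ = (X.submatrix id Fin.castSucc) * (Csq T n)ᵀ := by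
  ext i j
  rw [Matrix.mul_apply, Matrix.mul_apply]
  rw [Fin.sum_univ_castSucc (fun a => X i a * (Chat T n)ᵀ a j)]
  have hz : (Chat T n)ᵀ (Fin.last n) j = 0 := by
    rw [Matrix.transpose_apply]
    simp only [Chat, Matrix.of_apply, Fin.val_last]
    exact cN_gt T _ _ (by have := j.isLt; omega)
  rw [hz, mul_zero, add_zero]
  apply Finset.sum_congr rfl
  intro b _
  rfl

lemma sandwich (n : ℕ) (X : Matrix (Fin (n+1)) (Fin (n+1)) ℝ) :
    Chat T n * X * (Chat T n)ᵀ
      = Csq T n * (X.submatrix Fin.castSucc Fin.castSucc) * (Csq T n)ᵀ := by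
  rw [Chat_mul T n X, Matrix.mul_assoc, mul_ChatT T n (X.submatrix Fin.castSucc id),
    Matrix.submatrix_submatrix]
  have h : X.submatrix (Fin.castSucc ∘ id) (id ∘ Fin.castSucc)
      = X.submatrix Fin.castSucc Fin.castSucc := by
    rw [Function.comp_id, Function.id_comp]
  rw [h, ← Matrix.mul_assoc]

lemma dprod (hT : ∀ i, T i ≠ 0) (n : ℕ) (a : Fin (n+1)) :
    (∏ b ∈ Finset.univ.erase a, w T (2*(b:ℕ)+1))
      = (∏ ℓ ∈ Finset.Ico (2*(a:ℕ)+1) (2*n+1), T ℓ) * ∏ b ∈ Finset.range n, w T (2*b+1) := by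
  have hw : w T (2*(a:ℕ)+1) ≠ 0 := by
    rw [w]; exact Finset.prod_ne_zero_iff.mpr (fun i _ => hT i)
  apply mul_right_cancel₀ hw
  rw [Finset.prod_erase_mul Finset.univ _ (Finset.mem_univ a)]
  rw [show (∏ b : Fin (n+1), w T (2*(b:ℕ)+1)) = ∏ b ∈ Finset.range (n+1), w T (2*b+1) from
    Fin.prod_univ_eq_prod_range (fun b => w T (2*b+1)) (n+1)]
  rw [Finset.prod_range_succ]
  have key : w T (2*(a:ℕ)+1) * (∏ ℓ ∈ Finset.Ico (2*(a:ℕ)+1) (2*n+1), T ℓ) = w T (2*n+1) := by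
    rw [w, w]
    exact Finset.prod_range_mul_prod_Ico T (by omega : 2*(a:ℕ)+1 ≤ 2*n+1)
  rw [← key]
  ring

lemma adjK (n : ℕ) (α β : ℝ) :
    (Tri T α (n+1) * Matrix.diagonal (fun k : Fin (n+1) => w T (2*(k:ℕ)+1))
        * (Tri T β (n+1))ᵀ).adjugate (Fin.last n) (Fin.last n)
      = ∑ a : Fin (n+1),
          ((-1:ℝ)^((n:ℕ)+(a:ℕ)) * gpoly T β (2*(a:ℕ)+1))
            * ((∏ b ∈ Finset.univ.erase a, w T (2*(b:ℕ)+1))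
              * ((-1:ℝ)^((n:ℕ)+(a:ℕ)) * gpoly T α (2*(a:ℕ)+1))) := by
  rw [Matrix.adjugate_mul_distrib, Matrix.adjugate_mul_distrib, Matrix.mul_apply]
  apply Finset.sum_congr rfl
  intro a _
  rw [← Matrix.adjugate_transpose, Matrix.transpose_apply, adj_Tri_last T β n a]
  congr 1
  rw [Matrix.adjugate_diagonal, Matrix.diagonal_mul, adj_Tri_last T α n a]


lemma main_calc (hT : ∀ i, T i ≠ 0) (n : ℕ) (hn : 0 < n) (α β : ℝ) :
    Matrix.det (Matrix.of fun i j : Fin n =>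
        α * β * cN T (2*((i:ℕ)+(j:ℕ)+1)) 0 + (α + β) * cN T (2*((i:ℕ)+(j:ℕ)+2)) 0
          + cN T (2*((i:ℕ)+(j:ℕ)+3)) 0)
      = (∑ j ∈ Finset.range (n + 1),
            (∏ ℓ ∈ Finset.Ico (2 * j + 1) (2 * n + 1), T ℓ)
              * gpoly T α (2 * j + 1) * gpoly T β (2 * j + 1))
        * Matrix.det (Matrix.of fun i j : Fin n => cN T (2*((i:ℕ)+(j:ℕ)+1)) 0) := by
  have hsmall : Matrix.det (Matrix.of fun i j : Fin n => cN T (2*((i:ℕ)+(j:ℕ)+1)) 0)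
      = ∏ b ∈ Finset.range n, w T (2*b+1) := by
    rw [Hankel_RHS_eq T n, Matrix.det_mul, Matrix.det_mul, det_Csq, Matrix.det_transpose,
      det_Csq, Matrix.det_diagonal, one_mul, mul_one]
    exact Fin.prod_univ_eq_prod_range (fun b => w T (2*b+1)) n
  have hK : Matrix.det (Matrix.of fun i j : Fin n =>
        α * β * cN T (2*((i:ℕ)+(j:ℕ)+1)) 0 + (α + β) * cN T (2*((i:ℕ)+(j:ℕ)+2)) 0
          + cN T (2*((i:ℕ)+(j:ℕ)+3)) 0)
      = ((Tri T α (n+1) * Matrix.diagonal (fun k : Fin (n+1) => w T (2*(k:ℕ)+1))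
          * (Tri T β (n+1))ᵀ).submatrix Fin.castSucc Fin.castSucc).det := by
    rw [Hankel_LHS_eq T n α β, Bm_eq T α n hn, Bm_eq T β n hn, Matrix.transpose_mul]
    have hassoc : Chat T n * Tri T α (n+1)
           * Matrix.diagonal (fun k : Fin (n+1) => w T (2*(k:ℕ)+1))
           * ((Tri T β (n+1))ᵀ * (Chat T n)ᵀ)
        = Chat T n * (Tri T α (n+1)
           * Matrix.diagonal (fun k : Fin (n+1) => w T (2*(k:ℕ)+1)) * (Tri T β (n+1))ᵀ)
           * (Chat T n)ᵀ := by
      simp only [Matrix.mul_assoc]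
    rw [hassoc, sandwich T n, Matrix.det_mul, Matrix.det_mul, det_Csq,
      Matrix.det_transpose, det_Csq, one_mul, mul_one]
  have sign : ∀ e : ℕ, (-1:ℝ)^e * (-1:ℝ)^e = 1 := fun e => by
    rw [← pow_add]; exact Even.neg_one_pow ⟨e, rfl⟩
  have point : ∀ a : Fin (n+1),
       ((-1:ℝ)^((n:ℕ)+(a:ℕ)) * gpoly T β (2*(a:ℕ)+1))
         * ((∏ b ∈ Finset.univ.erase a, w T (2*(b:ℕ)+1))
           * ((-1:ℝ)^((n:ℕ)+(a:ℕ)) * gpoly T α (2*(a:ℕ)+1)))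
      = ((∏ ℓ ∈ Finset.Ico (2*(a:ℕ)+1) (2*n+1), T ℓ)
            * gpoly T α (2*(a:ℕ)+1) * gpoly T β (2*(a:ℕ)+1))
          * ∏ b ∈ Finset.range n, w T (2*b+1) := by
    intro a
    rw [dprod T hT n a]
    have h := sign ((n:ℕ)+(a:ℕ))
    linear_combination (gpoly T β (2*(a:ℕ)+1) * gpoly T α (2*(a:ℕ)+1)
       * (∏ ℓ ∈ Finset.Ico (2*(a:ℕ)+1) (2*n+1), T ℓ)
       * (∏ b ∈ Finset.range n, w T (2*b+1))) * h
  rw [hsmall, hK, det_corner, adjK T n α β,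
    Finset.sum_congr rfl (fun a _ => point a)]
  rw [Fin.sum_univ_eq_sum_range (fun a =>
     ((∏ ℓ ∈ Finset.Ico (2*a+1) (2*n+1), T ℓ)
           * gpoly T α (2*a+1) * gpoly T β (2*a+1))
         * ∏ b ∈ Finset.range n, w T (2*b+1)) (n+1)]
  rw [← Finset.sum_mul]

end HankelAux

/-- Corollary 2, Eq. (2.10): for `n ≥ 1` and real `α, β`,
`det(αβ c_{i+j+1} + (α+β) c_{i+j+2} + c_{i+j+3})_{i,j=0}^{n-1}
  = (∑_{j=0}^{n} (∏_{ℓ=2j+1}^{2n} T_ℓ) g_{2j+1}(α) g_{2j+1}(β)) · det(c_{i+j+1})_{i,j=0}^{n-1}`,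
where `c_n = c(2n, 0)`. -/
theorem hankel_three_term_dyck_odd (T : ℕ → ℝ) (hT : ∀ n, T n ≠ 0)
    (n : ℕ) (hn : 0 < n) (α β : ℝ) :
    Matrix.det (Matrix.of fun i j : Fin n =>
        α * β * dyckGF T (2 * ((i : ℕ) + (j : ℕ) + 1)) 0
          + (α + β) * dyckGF T (2 * ((i : ℕ) + (j : ℕ) + 2)) 0
          + dyckGF T (2 * ((i : ℕ) + (j : ℕ) + 3)) 0)
      = (∑ j ∈ Finset.range (n + 1),
            (∏ ℓ ∈ Finset.Ico (2 * j + 1) (2 * n + 1), T ℓ)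
              * gpoly T α (2 * j + 1) * gpoly T β (2 * j + 1))
        * Matrix.det (Matrix.of fun i j : Fin n =>
            dyckGF T (2 * ((i : ℕ) + (j : ℕ) + 1)) 0) := by
  have hM1 : (Matrix.of fun i j : Fin n =>
        α * β * dyckGF T (2 * ((i : ℕ) + (j : ℕ) + 1)) 0
          + (α + β) * dyckGF T (2 * ((i : ℕ) + (j : ℕ) + 2)) 0
          + dyckGF T (2 * ((i : ℕ) + (j : ℕ) + 3)) 0)
      = (Matrix.of fun i j : Fin n =>
        α * β * HankelAux.cN T (2*((i:ℕ)+(j:ℕ)+1)) 0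
          + (α + β) * HankelAux.cN T (2*((i:ℕ)+(j:ℕ)+2)) 0
          + HankelAux.cN T (2*((i:ℕ)+(j:ℕ)+3)) 0) := by
    ext i j
    simp only [Matrix.of_apply, HankelAux.cN, Nat.cast_zero]
  have hM2 : (Matrix.of fun i j : Fin n => dyckGF T (2 * ((i : ℕ) + (j : ℕ) + 1)) 0)
      = (Matrix.of fun i j : Fin n => HankelAux.cN T (2*((i:ℕ)+(j:ℕ)+1)) 0) := by
    ext i j
    simp only [Matrix.of_apply, HankelAux.cN, Nat.cast_zero]
  rw [hM1, hM2]
  exact HankelAux.main_calc T hT n hn α β
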